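/- arXiv:1508.07222 — 3 statements merged into one kernel-verified Lean document; each statement's English description precedes it below -/
import Mathlib

section
/- For all integers m, n ≥ 0 with (m,n) ≠ (0,1), setting p = 2m+n (so p ≥ 2), and for every integer k ≥ 3, the maximum of the (m,n)-colored mixed chromatic number χ_{(m,n)}(G) over all simple graphs G with acyclic chromatic number at most k equals k·p^{k-1}. -/
/-- The possible kinds of links from a vertex `u` to a vertex `v` in an
`(m,n)`-colored mixed graph: an arc `u → v` of one of `m` colors, an arc
`v → u` of one of `m` colors, or an (unoriented) edge of one of `n` colors. -/
inductive Link (m n : ℕ) : Type where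
  | arcOut : Fin m → Link m n
  | arcIn : Fin m → Link m n
  | edge : Fin n → Link m n

/-- The link as seen from the other endpoint. -/
def Link.flip {m n : ℕ} : Link m n → Link m n
  | .arcOut c => .arcIn c
  | .arcIn c => .arcOut c
  | .edge c => .edge c

/-- An `(m,n)`-colored mixed graph on vertex type `V`: between any two distinct
vertices there is at most one link (a colored arc in either direction or a
colored edge), and there are no loops. -/
structure CMGraph (m n : ℕ) (V : Type) where
  link : V → V → Option (Link m n)
  symm : ∀ u v, link v u = (link u v).map Link.flip
  loopless : ∀ v, link v v = none

/-- The underlying simple graph of an `(m,n)`-colored mixed graph. -/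
def CMGraph.underlying {m n : ℕ} {V : Type} (G : CMGraph m n V) : SimpleGraph V where
  Adj u v := (G.link u v).isSome
  symm := by
    constructor
    intro u v h
    rw [G.symm u v]
    rcases hx : G.link u v with _ | l
    · rw [hx] at h; simp at h
    · simp
  loopless := by
    constructor
    intro v h
    rw [G.loopless v] at h
    simp at h

/-- A homomorphism of `(m,n)`-colored mixed graphs: arcs map to arcs of the same
color and direction, edges map to edges of the same color. -/
def IsCMHom {m n : ℕ} {V W : Type} (G : CMGraph m n V) (H : CMGraph m n W)
    (f : V → W) : Prop :=
  ∀ u v l, G.link u v = some l → H.link (f u) (f v) = some l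

/-- `G` admits a homomorphism to some `(m,n)`-colored mixed graph on at most `k`
vertices, i.e. `χ_{(m,n)}(G) ≤ k`. -/
def CMChromAtMost {m n : ℕ} {V : Type} (G : CMGraph m n V) (k : ℕ) : Prop :=
  ∃ (W : Type) (inst : Fintype W) (H : CMGraph m n W) (f : V → W),
    @Fintype.card W inst ≤ k ∧ IsCMHom G H f

/-- Every `(m,n)`-colored mixed graph admitting a homomorphism from `G` has at
least `k` vertices, i.e. `χ_{(m,n)}(G) ≥ k`. -/
def CMChromAtLeast {m n : ℕ} {V : Type} (G : CMGraph m n V) (k : ℕ) : Prop :=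
  ∀ (W : Type) (inst : Fintype W) (H : CMGraph m n W) (f : V → W),
    IsCMHom G H f → k ≤ @Fintype.card W inst

/-- The acyclic chromatic number of `G` is at most `k`: there is a proper
`k`-coloring in which the union of any two color classes induces a forest. -/
def AcycChromAtMost {V : Type} (G : SimpleGraph V) (k : ℕ) : Prop :=
  ∃ c : V → Fin k, (∀ u v, G.Adj u v → c u ≠ c v) ∧
    ∀ i j : Fin k, (G.induce {v | c v = i ∨ c v = j}).IsAcyclic

/-- The edge set of `G` can be decomposed into `r` forests. -/
def ArbAtMost {V : Type} (G : SimpleGraph V) (r : ℕ) : Prop :=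
  ∃ F : Fin r → SimpleGraph V,
    (∀ i, F i ≤ G) ∧
    (∀ i, (F i).IsAcyclic) ∧
    (∀ u v, G.Adj u v → ∃ i, (F i).Adj u v) ∧
    (∀ i j, i ≠ j → ∀ u v, ¬ ((F i).Adj u v ∧ (F j).Adj u v))

/-- Every vertex of `G` has degree at most `d`. -/
def MaxDegAtMost {V : Type} (G : SimpleGraph V) (d : ℕ) : Prop :=
  ∀ v, (G.neighborSet v).ncard ≤ d

/-- `G` is `d`-degenerate: every nonempty (induced) subgraph has a vertex of
degree at most `d` in it. -/
def DegenAtMost {V : Type} (G : SimpleGraph V) (d : ℕ) : Prop :=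
  ∀ s : Set V, s.Nonempty → ∃ v ∈ s, (G.neighborSet v ∩ s).ncard ≤ d





@[simp] lemma Link.flip_flip {m n : ℕ} (l : Link m n) : l.flip.flip = l := by
  cases l <;> rfl

def Link.enc {m n : ℕ} : Link m n → ℕ
  | .arcOut c => c.val
  | .arcIn c => m + c.val
  | .edge c => 2 * m + c.val

lemma Link.enc_lt {m n : ℕ} (l : Link m n) : l.enc < 2 * m + n := by
  cases l <;> rename_i c <;> have := c.isLt <;> simp only [enc] <;> omega

lemma Link.enc_inj {m n : ℕ} {l l' : Link m n} (h : l.enc = l'.enc) : l = l' := by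
  cases l <;> cases l' <;>
    simp only [enc] at h <;>
    first
      | (rename_i c c'; exact congrArg _ (Fin.ext (by omega)))
      | (rename_i c c'; exact absurd h (by have := c.isLt; have := c'.isLt; omega))

def Link.dec (m n : ℕ) (t : ℕ) (h : t < 2 * m + n) : Link m n :=
  if h1 : t < m then .arcOut ⟨t, h1⟩
  else if h2 : t < 2 * m then .arcIn ⟨t - m, by omega⟩
  else .edge ⟨t - 2 * m, by omega⟩

lemma Link.enc_dec (m n t : ℕ) (h : t < 2 * m + n) : (Link.dec m n t h).enc = t := by
  unfold Link.dec
  split_ifs <;> simp [enc] <;> omega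
open SimpleGraph Walk

variable {V : Type} {G : SimpleGraph V}

lemma isCycle_reverse {u : V} {p : G.Walk u u} (h : p.IsCycle) : p.reverse.IsCycle := by
  have h3 := h.three_le_length
  refine ⟨⟨h.isCircuit.isTrail.reverse, ?_⟩, ?_⟩
  · intro hn
    have := congrArg Walk.reverse hn
    rw [Walk.reverse_reverse] at this
    exact h.ne_nil (by simpa using this)
  · rw [Walk.support_reverse]
    have hsup := p.support_eq_cons
    set t := p.support.tail with ht
    have htne : t ≠ [] := by
      have hlen : p.support.length = p.length + 1 := p.length_support
      intro h0
      rw [hsup, h0] at hlen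
      simp only [List.length_cons, List.length_nil] at hlen
      omega
    have h1 : t.getLast? = some u := by
      have h2 : p.support.getLast? = some u := by
        rw [List.getLast?_eq_getLast_of_ne_nil (by simp), p.getLast_support]
      rw [hsup, List.getLast?_eq_getLast_of_ne_nil (List.cons_ne_nil _ _),
        List.getLast_cons htne, ← List.getLast?_eq_getLast_of_ne_nil htne] at h2
      exact h2
    have hlast : t.getLast htne = u := by
      rw [List.getLast?_eq_getLast_of_ne_nil htne] at h1
      exact Option.some_injective _ h1
    have hdec : t = t.dropLast ++ [u] := by
      conv_lhs => rw [← List.dropLast_append_getLast htne]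
      rw [hlast]
    have hnd : t.Nodup := h.support_nodup
    rw [hsup, hdec]
    have hrev : (u :: (t.dropLast ++ [u])).reverse = u :: (t.dropLast.reverse ++ [u]) := by
      simp
    rw [hrev, List.tail_cons]
    have hperm : (t.dropLast.reverse ++ [u]).Perm (u :: t.dropLast.reverse) :=
      List.perm_append_singleton u _
    rw [hperm.nodup_iff]
    rw [List.nodup_cons, List.mem_reverse, List.nodup_reverse]
    rw [hdec] at hnd
    have h4 := (List.perm_append_singleton u t.dropLast).nodup_iff.mp hnd
    rw [List.nodup_cons] at h4
    exact h4


lemma exists_cons_of_ne_nil {a : V} (w : G.Walk a a) (h : w ≠ Walk.nil) :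
    ∃ (b : V) (hab : G.Adj a b) (q : G.Walk b a), w = Walk.cons hab q := by
  cases w with
  | nil => exact absurd rfl h
  | cons hh q => exact ⟨_, hh, q, rfl⟩

lemma no_cycle_of_parent {u : V} (rk : V → ℕ) (par : V → V)
    (hcrit : ∀ a b, G.Adj a b → (par a = b ∧ rk b < rk a) ∨ (par b = a ∧ rk a < rk b))
    (c : G.Walk u u) (hcyc : c.IsCycle) (hmax : ∀ w ∈ c.support, rk w ≤ rk u) : False := by
  cases c with
  | nil => exact hcyc.ne_nil rfl
  | @cons _ b _ hadj q =>
    have h3 := hcyc.three_le_length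
    rw [Walk.length_cons] at h3
    have hb : b ∈ (Walk.cons hadj q).support := by
      rw [Walk.support_cons]
      exact List.mem_cons_of_mem _ q.start_mem_support
    have h1 : par u = b := by
      rcases hcrit u b hadj with ⟨h, _⟩ | ⟨_, hlt⟩
      · exact h
      · exact absurd (hmax b hb) (by omega)
    obtain ⟨b2, hadj2, q2, hq2⟩ :=
      exists_cons_of_ne_nil ((Walk.cons hadj q).reverse) (isCycle_reverse hcyc).ne_nil
    have hb2 : b2 ∈ (Walk.cons hadj q).support := by
      have : b2 ∈ (Walk.cons hadj q).reverse.support := by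
        rw [hq2, Walk.support_cons]
        exact List.mem_cons_of_mem _ q2.start_mem_support
      rwa [Walk.support_reverse, List.mem_reverse] at this
    have h2 : par u = b2 := by
      rcases hcrit u b2 hadj2 with ⟨h, _⟩ | ⟨_, hlt⟩
      · exact h
      · exact absurd (hmax b2 hb2) (by omega)
    have hbb : b = b2 := h1.symm.trans h2
    have hEr : (Walk.cons hadj q).edges.reverse = s(u, b2) :: q2.edges := by
      rw [← Walk.edges_reverse, hq2, Walk.edges_cons]
    have hqe : q.edges ≠ [] := by
      have hle : q.edges.length = q.length := q.length_edges
      intro h0; rw [h0] at hle; simp at hle; omega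
    have hL1 : (Walk.cons hadj q).edges.getLast? = some s(u, b2) := by
      have := congrArg List.head? hEr
      rwa [List.head?_reverse, List.head?_cons] at this
    have hL2 : (Walk.cons hadj q).edges.getLast? = q.edges.getLast? := by
      rw [Walk.edges_cons, List.getLast?_eq_getLast_of_ne_nil (List.cons_ne_nil _ _),
        List.getLast_cons hqe, ← List.getLast?_eq_getLast_of_ne_nil hqe]
    have hmem : s(u, b) ∈ q.edges := by
      rw [← hbb] at hL1
      exact List.mem_of_getLast? (hL2.symm.trans hL1)
    have hnd := hcyc.isCircuit.isTrail.edges_nodup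
    rw [Walk.edges_cons] at hnd
    exact (List.nodup_cons.mp hnd).1 hmem

lemma acyclic_of_parent (rk : V → ℕ) (par : V → V)
    (hcrit : ∀ a b, G.Adj a b → (par a = b ∧ rk b < rk a) ∨ (par b = a ∧ rk a < rk b)) :
    G.IsAcyclic := by
  intro v c hc
  classical
  obtain ⟨u, hu, hmax⟩ : ∃ u ∈ c.support, ∀ w ∈ c.support, rk w ≤ rk u := by
    obtain ⟨u, hu1, hu2⟩ := c.support.toFinset.exists_max_image rk
      ⟨v, List.mem_toFinset.mpr c.start_mem_support⟩
    exact ⟨u, List.mem_toFinset.mp hu1, fun w hw => hu2 w (List.mem_toFinset.mpr hw)⟩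
  have hcyc' : (c.rotate u hu).IsCycle := hc.rotate hu
  have hsub : ∀ w ∈ (c.rotate u hu).support, w ∈ c.support := by
    intro w hw
    rw [(c.rotate u hu).support_eq_cons] at hw
    rcases List.mem_cons.mp hw with h | h
    · exact h ▸ hu
    · have hr := c.support_rotate u hu
      exact List.mem_of_mem_tail (hr.perm.mem_iff.mp h)
  exact no_cycle_of_parent rk par hcrit (c.rotate u hu) hcyc'
    (fun w hw => hmax w (hsub w hw))




lemma exists_leaf [Fintype V] [DecidableEq V] (hG : G.IsAcyclic) (s : Finset V)
    (hs : s.Nonempty) :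
    ∃ v ∈ s, ∀ x ∈ s, ∀ y ∈ s, G.Adj v x → G.Adj v y → x = y := by
  classical
  set T : Set ℕ := {ℓ | ∃ (a b : V) (w : G.Walk a b), w.IsPath ∧ (∀ z ∈ w.support, z ∈ s)
    ∧ w.length = ℓ} with hT
  obtain ⟨a0, ha0⟩ := hs
  have hT0 : 0 ∈ T := ⟨a0, a0, Walk.nil, by simp, by simpa using ha0, rfl⟩
  have hbdd : ∀ ℓ ∈ T, ℓ ≤ s.card := by
    rintro ℓ ⟨a, b, w, hpath, hsup, rfl⟩
    have h1 : w.support.toFinset ⊆ s := fun z hz => hsup z (List.mem_toFinset.mp hz)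
    have h2 : w.support.toFinset.card = w.support.length :=
      List.toFinset_card_of_nodup hpath.support_nodup
    have h3 := Finset.card_le_card h1
    rw [h2, w.length_support] at h3
    omega
  have hbddA : BddAbove T := ⟨s.card, fun ℓ hl => hbdd ℓ hl⟩
  have hLmem : sSup T ∈ T := Nat.sSup_mem ⟨0, hT0⟩ hbddA
  obtain ⟨a, b, w, hpath, hsup, hlen⟩ := hLmem
  refine ⟨a, hsup a w.start_mem_support, ?_⟩
  have key : ∀ x ∈ s, G.Adj a x → x = w.getVert 1 := by
    intro x hx hax
    have hxs : x ∈ w.support := by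
      by_contra hxn
      have hpath' : (Walk.cons hax.symm w).IsPath := hpath.cons hxn
      have hmem' : w.length + 1 ∈ T := by
        refine ⟨x, b, Walk.cons hax.symm w, hpath', ?_, by simp⟩
        intro z hz
        rw [Walk.support_cons] at hz
        rcases List.mem_cons.mp hz with h | h
        · exact h ▸ hx
        · exact hsup z h
      have := le_csSup hbddA hmem'
      omega
    have hxa : x ≠ a := fun h => G.irrefl (h ▸ hax)
    have hp : (w.takeUntil x hxs).IsPath := hpath.takeUntil hxs
    have hq : (Walk.cons hax (Walk.nil : G.Walk x x)).IsPath := by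
      rw [Walk.cons_isPath_iff]
      exact ⟨by simp, by simpa using hxa.symm⟩
    have hpq : w.takeUntil x hxs = Walk.cons hax Walk.nil :=
      congrArg Subtype.val (hG.path_unique ⟨_, hp⟩ ⟨_, hq⟩)
    have hlen1 : (w.takeUntil x hxs).length = 1 := by rw [hpq]; simp
    have hgv : w.getVert 1 = x := by
      conv_lhs => rw [← w.take_spec hxs]
      rw [Walk.getVert_append, hlen1]
      simp
    exact hgv.symm
  intro x hx y hy hax hay
  rw [key x hx hax, key y hy hay]

lemma exists_potential [Fintype V] [DecidableEq V] {A : Type} [AddCommGroup A]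
    (hG : G.IsAcyclic) (τ : V → V → A)
    (hτ : ∀ u v, G.Adj u v → τ u v = τ v u) :
    ∃ φ : V → A, ∀ u v, G.Adj u v → φ u + φ v = τ u v := by
  classical
  suffices H : ∀ (N : ℕ) (s : Finset V), s.card ≤ N →
      ∃ φ : V → A, ∀ u ∈ s, ∀ v ∈ s, G.Adj u v → φ u + φ v = τ u v by
    obtain ⟨φ, hφ⟩ := H (Finset.univ.card) Finset.univ le_rfl
    exact ⟨φ, fun u v h => hφ u (Finset.mem_univ u) v (Finset.mem_univ v) h⟩
  intro N
  induction N with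
  | zero =>
    intro s hcard
    refine ⟨0, fun u hu => ?_⟩
    rw [Finset.card_eq_zero.mp (Nat.le_zero.mp hcard)] at hu
    exact absurd hu (Finset.notMem_empty u)
  | succ N ih =>
    intro s hcard
    rcases Finset.eq_empty_or_nonempty s with rfl | hs
    · exact ⟨0, fun u hu => absurd hu (Finset.notMem_empty u)⟩
    obtain ⟨v, hv, hleaf⟩ := exists_leaf hG s hs
    obtain ⟨φ, hφ⟩ := ih (s.erase v) (by
      have := Finset.card_erase_of_mem hv
      omega)
    by_cases hnb : ∃ u0 ∈ s.erase v, G.Adj v u0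
    · obtain ⟨u0, hu0, hadj0⟩ := hnb
      refine ⟨Function.update φ v (τ v u0 - φ u0), ?_⟩
      intro u hu w hw hadj
      by_cases hu' : u = v <;> by_cases hw' : w = v
      · exact absurd (hu' ▸ hw' ▸ hadj) (G.irrefl)
      · have hwu0 : w = u0 := hleaf w hw u0 (Finset.mem_of_mem_erase hu0) (hu' ▸ hadj) hadj0
        rw [hu', hwu0, Function.update_self,
          Function.update_of_ne (Finset.mem_erase.mp hu0).1]
        abel
      · have huu0 : u = u0 := hleaf u hu u0 (Finset.mem_of_mem_erase hu0)
          (hw' ▸ hadj.symm) hadj0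
        rw [huu0, hw', Function.update_self,
          Function.update_of_ne (Finset.mem_erase.mp hu0).1,
          hτ v u0 ((huu0 ▸ hw' ▸ hadj).symm)]
        abel
      · rw [Function.update_of_ne hu', Function.update_of_ne hw']
        exact hφ u (Finset.mem_erase.mpr ⟨hu', hu⟩) w (Finset.mem_erase.mpr ⟨hw', hw⟩) hadj
    · refine ⟨φ, ?_⟩
      intro u hu w hw hadj
      by_cases hu' : u = v <;> by_cases hw' : w = v
      · exact absurd (hu' ▸ hw' ▸ hadj) (G.irrefl)
      · exact absurd ⟨w, Finset.mem_erase.mpr ⟨hw', hw⟩, hu' ▸ hadj⟩ hnb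
      · exact absurd ⟨u, Finset.mem_erase.mpr ⟨hu', hu⟩, hw' ▸ hadj.symm⟩ hnb
      · exact hφ u (Finset.mem_erase.mpr ⟨hu', hu⟩) w (Finset.mem_erase.mpr ⟨hw', hw⟩) hadj
def coreSigma (k : ℕ) (B : Type) (b₀ : B) :
    {w : Fin k × (Fin k → B) // w.2 w.1 = b₀} ≃ Σ i : Fin k, {x : Fin k → B // x i = b₀} where
  toFun w := ⟨w.1.1, w.1.2, w.2⟩
  invFun s := ⟨(s.1, s.2.1), s.2.2⟩
  left_inv w := rfl
  right_inv s := rfl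

def coreFiber (k : ℕ) (B : Type) (b₀ : B) (i : Fin k) :
    {x : Fin k → B // x i = b₀} ≃ ({j : Fin k // j ≠ i} → B) where
  toFun x j := x.1 j.1
  invFun y := ⟨fun j => if h : j = i then b₀ else y ⟨j, h⟩, by simp⟩
  left_inv := by
    rintro ⟨x, hx⟩
    ext j
    by_cases h : j = i
    · subst h; simpa using hx.symm
    · simp [h]
  right_inv := by
    intro y
    funext j
    simp [j.2]

lemma card_core (k : ℕ) (B : Type) [Fintype B] [DecidableEq B] (b₀ : B) :
    Fintype.card {w : Fin k × (Fin k → B) // w.2 w.1 = b₀}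
      = k * (Fintype.card B) ^ (k - 1) := by
  rw [Fintype.card_congr (coreSigma k B b₀), Fintype.card_sigma]
  have hfib : ∀ i : Fin k, Fintype.card {x : Fin k → B // x i = b₀}
      = (Fintype.card B) ^ (k - 1) := by
    intro i
    rw [Fintype.card_congr (coreFiber k B b₀ i), Fintype.card_fun]
    congr 1
    have : Fintype.card {j : Fin k // j ≠ i} = Fintype.card (Fin k) - Fintype.card {j : Fin k // j = i} :=
      Fintype.card_subtype_compl _
    rw [this, Fintype.card_subtype_eq, Fintype.card_fin]
  simp [hfib, Finset.sum_const, Finset.card_univ]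

theorem upper_bound (m n k : ℕ) (hp : 2 ≤ 2 * m + n) (hk : 3 ≤ k)
    (V : Type) (inst : Fintype V) (M : CMGraph m n V)
    (hac : AcycChromAtMost M.underlying k) :
    CMChromAtMost M (k * (2 * m + n) ^ (k - 1)) := by
  classical
  set p := 2 * m + n with hpdef
  haveI : NeZero p := ⟨by omega⟩
  obtain ⟨c, hproper, hforest⟩ := hac
  -- the symmetric edge value
  set τ : V → V → ZMod p := fun u v =>
    if c u < c v then ((Option.map Link.enc (M.link u v)).getD 0 : ℕ)
    else ((Option.map Link.enc (M.link v u)).getD 0 : ℕ) with hτdef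
  have hτsymm : ∀ u v, M.underlying.Adj u v → τ u v = τ v u := by
    intro u v hadj
    have hne : c u ≠ c v := hproper u v hadj
    rcases lt_trichotomy (c u) (c v) with h | h | h
    · simp only [hτdef]; rw [if_pos h, if_neg (asymm h)]
    · exact absurd h hne
    · simp only [hτdef]; rw [if_neg (asymm h), if_pos h]
  -- potentials for each pair of colors
  have hpot : ∀ i j : Fin k, ∃ φ : V → ZMod p, ∀ u v : V,
      (c u = i ∨ c u = j) → (c v = i ∨ c v = j) → M.underlying.Adj u v →
      φ u + φ v = τ u v := by
    intro i j
    set S : Set V := {v | c v = i ∨ c v = j} with hSdef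
    have hacy : (M.underlying.induce S).IsAcyclic := hforest i j
    obtain ⟨ψ, hψ⟩ := exists_potential hacy (fun (a b : ↥S) => τ a.1 b.1)
      (fun a b hab => hτsymm a.1 b.1 hab)
    refine ⟨fun v => if h : v ∈ S then ψ ⟨v, h⟩ else 0, ?_⟩
    intro u v hu hv hadj
    dsimp only
    rw [dif_pos (show u ∈ S from hu), dif_pos (show v ∈ S from hv)]
    exact hψ ⟨u, hu⟩ ⟨v, hv⟩ hadj
  choose Φ0 hΦ0 using hpot
  -- symmetrized potentials
  set Φ : Fin k → Fin k → V → ZMod p := fun i j => if i ≤ j then Φ0 i j else Φ0 j i with hΦdef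
  have hΦsymm : ∀ i j, Φ i j = Φ j i := by
    intro i j
    rcases le_or_gt i j with h | h
    · rcases lt_or_eq_of_le h with h' | h'
      · rw [hΦdef]; simp only [if_pos h, if_neg (not_le_of_gt h')]
      · subst h'; rfl
    · rw [hΦdef]; simp only [if_neg (not_le_of_gt h), if_pos h.le]
  have hΦ : ∀ i j : Fin k, ∀ u v : V,
      (c u = i ∨ c u = j) → (c v = i ∨ c v = j) → M.underlying.Adj u v →
      Φ i j u + Φ i j v = τ u v := by
    intro i j u v hu hv hadj
    rw [hΦdef]
    by_cases h : i ≤ j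
    · simp only [if_pos h]; exact hΦ0 i j u v hu hv hadj
    · simp only [if_neg h]; exact hΦ0 j i u v hu.symm hv.symm hadj
  -- the target graph
  set W := {w : Fin k × (Fin k → ZMod p) // w.2 w.1 = 0} with hWdef
  have hdec : ∀ z : ZMod p, z.val < 2 * m + n := fun z => z.val_lt
  set dl : ZMod p → Option (Link m n) := fun z => some (Link.dec m n z.val (hdec z))
    with hdldef
  set vl : W → W → ZMod p := fun a b => a.1.2 b.1.1 + b.1.2 a.1.1 with hvldef
  have hvlsymm : ∀ a b, vl a b = vl b a := fun a b => add_comm _ _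
  set HL : W → W → Option (Link m n) := fun a b =>
    if a.1.1 < b.1.1 then dl (vl a b)
    else if b.1.1 < a.1.1 then (dl (vl a b)).map Link.flip else none with hHLdef
  have hHsymm : ∀ a b, HL b a = (HL a b).map Link.flip := by
    intro a b
    rcases lt_trichotomy a.1.1 b.1.1 with h | h | h
    · simp only [hHLdef, if_pos h, if_neg (asymm h), hvlsymm b a]
    · have h1 : ¬ a.1.1 < b.1.1 := by rw [h]; exact lt_irrefl _
      have h2 : ¬ b.1.1 < a.1.1 := by rw [h]; exact lt_irrefl _
      simp only [hHLdef, if_neg h1, if_neg h2, Option.map_none]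
    · simp only [hHLdef, if_pos h, if_neg (asymm h), hvlsymm b a, hdldef,
        Option.map_some, Link.flip_flip]
  have hHloop : ∀ a, HL a a = none := by
    intro a
    rw [hHLdef]
    simp
  set H : CMGraph m n W := ⟨HL, hHsymm, hHloop⟩ with hHdef
  -- the homomorphism
  set f : V → W := fun v =>
    ⟨(c v, fun j => if j = c v then 0 else Φ (c v) j v), by simp⟩ with hfdef
  refine ⟨W, inferInstance, H, f, ?_, ?_⟩
  · rw [card_core k (ZMod p) 0, ZMod.card p]
  · intro u v l hl
    have hadj : M.underlying.Adj u v := by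
      show (M.link u v).isSome
      rw [hl]; rfl
    have hne : c u ≠ c v := hproper u v hadj
    have hval : vl (f u) (f v) = τ u v := by
      simp only [hvldef, hfdef]
      rw [if_neg hne.symm, if_neg hne]
      rw [hΦsymm (c v) (c u)]
      exact hΦ (c u) (c v) u v (Or.inl rfl) (Or.inr rfl) hadj
    show HL (f u) (f v) = some l
    rcases lt_trichotomy (c u) (c v) with h | h | h
    · have hfu : (f u).1.1 = c u := rfl
      have hτ : τ u v = ((Link.enc l : ℕ) : ZMod p) := by
        rw [hτdef]
        simp only [if_pos h, hl, Option.map_some, Option.getD_some]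
      simp only [hHLdef, hfu, show (f v).1.1 = c v from rfl, if_pos h, hdldef]
      congr 1
      apply Link.enc_inj
      rw [Link.enc_dec, hval, hτ, ZMod.val_natCast_of_lt (Link.enc_lt l)]
    · exact absurd h hne
    · have hτ : τ u v = ((Link.enc l.flip : ℕ) : ZMod p) := by
        simp only [hτdef]
        rw [if_neg (asymm h), M.symm u v, hl]
        simp
      simp only [hHLdef, show (f u).1.1 = c u from rfl, show (f v).1.1 = c v from rfl,
        if_neg (asymm h), if_pos h, hdldef, Option.map_some]
      congr 1
      have : Link.dec m n ((vl (f u) (f v)).val) (hdec _) = l.flip := by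
        apply Link.enc_inj
        rw [Link.enc_dec, hval, hτ, ZMod.val_natCast_of_lt (Link.enc_lt l.flip)]
      rw [this, Link.flip_flip]

section LB

variable (m n k : ℕ)

/-- injection of `Fin (2m+n)` into links -/
def iota (t : Fin (2 * m + n)) : Link m n := Link.dec m n t.val t.isLt

lemma iota_inj {t t' : Fin (2 * m + n)} (h : iota m n t = iota m n t') : t = t' := by
  have h2 := congrArg Link.enc h
  simp only [iota] at h2
  rw [Link.enc_dec, Link.enc_dec] at h2
  exact Fin.ext h2

abbrev CoreT (hp : 2 ≤ 2 * m + n) : Type :=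
  {w : Fin k × (Fin k → Fin (2 * m + n)) // w.2 w.1 = ⟨0, by omega⟩}

abbrev LBV (hp : 2 ≤ 2 * m + n) : Type :=
  CoreT m n k hp ⊕ (Fin k × Fin k) ⊕ (CoreT m n k hp × CoreT m n k hp)

variable (hp : 2 ≤ 2 * m + n)

def lbhalf : LBV m n k hp → LBV m n k hp → Option (Link m n)
  | Sum.inl t, Sum.inr (Sum.inl (i, j)) =>
      if t.1.1 = i ∧ j ≠ i then some (iota m n (t.1.2 j)) else none
  | Sum.inl t, Sum.inr (Sum.inr (t1, t2)) =>
      if t1.1.1 ≠ t2.1.1 then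
        (if t = t1 then some (iota m n ⟨0, by omega⟩)
         else if t = t2 then some (iota m n ⟨1, by omega⟩) else none)
      else none
  | _, _ => none

lemma lbhalf_loop (v : LBV m n k hp) : lbhalf m n k hp v v = none := by
  rcases v with t | a | z <;> rfl

lemma lbhalf_disj (u v : LBV m n k hp) :
    lbhalf m n k hp u v = none ∨ lbhalf m n k hp v u = none := by
  rcases u with t | a | z
  · rcases v with t' | a' | z'
    · exact Or.inl rfl
    · exact Or.inr rfl
    · exact Or.inr rfl
  · exact Or.inl rfl
  · exact Or.inl rfl

def lblk (u v : LBV m n k hp) : Option (Link m n) :=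
  match lbhalf m n k hp u v with
  | some l => some l
  | none => (lbhalf m n k hp v u).map Link.flip

def LBM : CMGraph m n (LBV m n k hp) where
  link := lblk m n k hp
  symm := by
    intro u v
    cases h1 : lbhalf m n k hp u v with
    | some l =>
      have h2 : lbhalf m n k hp v u = none :=
        (lbhalf_disj m n k hp u v).resolve_left (by rw [h1]; exact fun h => by cases h)
      simp only [lblk, h1, h2, Option.map_none, Option.map_some]
    | none =>
      cases h2 : lbhalf m n k hp v u with
      | some l =>
        simp only [lblk, h1, h2, Option.map_some, Link.flip_flip]
      | none =>
        simp only [lblk, h1, h2, Option.map_none]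
  loopless := by
    intro v
    simp only [lblk, lbhalf_loop, Option.map_none]

lemma lb_adj_iff (u v : LBV m n k hp) :
    (LBM m n k hp).underlying.Adj u v ↔
      (lbhalf m n k hp u v).isSome ∨ (lbhalf m n k hp v u).isSome := by
  show (lblk m n k hp u v).isSome ↔ _
  cases h1 : lbhalf m n k hp u v <;> cases h2 : lbhalf m n k hp v u <;>
    simp [lblk, h1, h2]

lemma lbhalf_cases {u v : LBV m n k hp} {l : Link m n}
    (h : lbhalf m n k hp u v = some l) :
    (∃ t i j, u = Sum.inl t ∧ v = Sum.inr (Sum.inl (i, j)) ∧ t.1.1 = i ∧ j ≠ i) ∨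
    (∃ t t1 t2, u = Sum.inl t ∧ v = Sum.inr (Sum.inr (t1, t2)) ∧ t1.1.1 ≠ t2.1.1 ∧
      (t = t1 ∨ t = t2)) := by
  rcases u with t | a | z
  · rcases v with t' | a' | z'
    · exact absurd h (by simp [lbhalf])
    · obtain ⟨i, j⟩ := a'
      left
      simp only [lbhalf] at h
      by_cases hc : t.1.1 = i ∧ j ≠ i
      · exact ⟨t, i, j, rfl, rfl, hc.1, hc.2⟩
      · rw [if_neg hc] at h; cases h
    · obtain ⟨t1, t2⟩ := z'
      right
      simp only [lbhalf] at h
      by_cases hc : t1.1.1 ≠ t2.1.1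
      · refine ⟨t, t1, t2, rfl, rfl, hc, ?_⟩
        by_cases h1 : t = t1
        · exact Or.inl h1
        · by_cases h2 : t = t2
          · exact Or.inr h2
          · rw [if_pos hc, if_neg h1, if_neg h2] at h; cases h
      · rw [if_neg hc] at h; cases h
  · exact absurd h (by rcases v with _ | _ | _ <;> simp [lbhalf])
  · exact absurd h (by rcases v with _ | _ | _ <;> simp [lbhalf])

end LB


section LB2

def pick3 (k : ℕ) (hk : 3 ≤ k) (a b : Fin k) : Fin k :=
  if a ≠ ⟨0, by omega⟩ ∧ b ≠ ⟨0, by omega⟩ then ⟨0, by omega⟩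
  else if a ≠ ⟨1, by omega⟩ ∧ b ≠ ⟨1, by omega⟩ then ⟨1, by omega⟩
  else ⟨2, by omega⟩

lemma pick3_ne (k : ℕ) (hk : 3 ≤ k) (a b : Fin k) : pick3 k hk a b ≠ a ∧ pick3 k hk a b ≠ b := by
  unfold pick3
  split_ifs with h1 h2
  · exact ⟨Ne.symm h1.1, Ne.symm h1.2⟩
  · exact ⟨Ne.symm h2.1, Ne.symm h2.2⟩
  · rw [not_and_or, not_ne_iff] at h1 h2
    constructor
    · intro hha
      rcases h1 with h1 | h1 <;> rcases h2 with h2 | h2 <;>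
        rw [← hha] at * <;> simp_all [Fin.ext_iff]
    · intro hhb
      rcases h1 with h1 | h1 <;> rcases h2 with h2 | h2 <;>
        rw [← hhb] at * <;> simp_all [Fin.ext_iff]

def lbcol (m n k : ℕ) (hp : 2 ≤ 2 * m + n) (hk : 3 ≤ k) : LBV m n k hp → Fin k
  | Sum.inl t => t.1.1
  | Sum.inr (Sum.inl (_, j)) => j
  | Sum.inr (Sum.inr (t1, t2)) => pick3 k hk t1.1.1 t2.1.1

lemma lb_proper (m n k : ℕ) (hp : 2 ≤ 2 * m + n) (hk : 3 ≤ k) (u v : LBV m n k hp) (h : (LBM m n k hp).underlying.Adj u v) :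
    lbcol m n k hp hk u ≠ lbcol m n k hp hk v := by
  rw [lb_adj_iff] at h
  have main : ∀ a b : LBV m n k hp, (lbhalf m n k hp a b).isSome →
      lbcol m n k hp hk a ≠ lbcol m n k hp hk b := by
    intro a b hab
    obtain ⟨l, hl⟩ := Option.isSome_iff_exists.mp hab
    rcases lbhalf_cases m n k hp hl with
      ⟨t, i, j, rfl, rfl, hti, hji⟩ | ⟨t, t1, t2, rfl, rfl, h12, ht⟩
    · simp only [lbcol, hti]
      exact fun hh => hji hh.symm
    · simp only [lbcol]
      rcases ht with rfl | rfl
      · exact fun hh => (pick3_ne k hk t.1.1 t2.1.1).1 hh.symm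
      · exact fun hh => (pick3_ne k hk t1.1.1 t.1.1).2 hh.symm
  rcases h with h | h
  · exact main u v h
  · exact (main v u h).symm

end LB2

section LB3

def lbrk (m n k : ℕ) (hp : 2 ≤ 2 * m + n) : LBV m n k hp → ℕ
  | Sum.inl _ => 1
  | Sum.inr (Sum.inl _) => 0
  | Sum.inr (Sum.inr _) => 2

def lbpar (m n k : ℕ) (hp : 2 ≤ 2 * m + n) (hk : 3 ≤ k) (α β : Fin k) :
    {v : LBV m n k hp // lbcol m n k hp hk v = α ∨ lbcol m n k hp hk v = β} →
    {v : LBV m n k hp // lbcol m n k hp hk v = α ∨ lbcol m n k hp hk v = β} :=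
  fun v => match v with
  | ⟨Sum.inl t, _⟩ =>
      if t.1.1 = α then ⟨Sum.inr (Sum.inl (t.1.1, β)), Or.inr rfl⟩
      else ⟨Sum.inr (Sum.inl (t.1.1, α)), Or.inl rfl⟩
  | ⟨Sum.inr (Sum.inl a), h⟩ => ⟨Sum.inr (Sum.inl a), h⟩
  | ⟨Sum.inr (Sum.inr (t1, t2)), h⟩ =>
      if h1 : t1.1.1 = α ∨ t1.1.1 = β then ⟨Sum.inl t1, h1⟩
      else if h2 : t2.1.1 = α ∨ t2.1.1 = β then ⟨Sum.inl t2, h2⟩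
      else ⟨Sum.inr (Sum.inr (t1, t2)), h⟩

lemma lb_crit_half (m n k : ℕ) (hp : 2 ≤ 2 * m + n) (hk : 3 ≤ k) (α β : Fin k)
    (a b : {v : LBV m n k hp // lbcol m n k hp hk v = α ∨ lbcol m n k hp hk v = β})
    (l : Link m n) (hl : lbhalf m n k hp a.1 b.1 = some l) :
    (lbpar m n k hp hk α β a = b ∧ lbrk m n k hp b.1 < lbrk m n k hp a.1) ∨
    (lbpar m n k hp hk α β b = a ∧ lbrk m n k hp a.1 < lbrk m n k hp b.1) := by
  obtain ⟨av, ham⟩ := a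
  obtain ⟨bv, hbm⟩ := b
  simp only at hl
  rcases lbhalf_cases m n k hp hl with
    ⟨t, i, j, ha', hb', hti, hji⟩ | ⟨t, t1, t2, ha', hb', h12, hor⟩
  · subst ha'; subst hb'
    left
    refine ⟨?_, by simp [lbrk]⟩
    have hamc : t.1.1 = α ∨ t.1.1 = β := ham
    have hbmc : j = α ∨ j = β := hbm
    by_cases hta : t.1.1 = α
    · have hj : j = β := by
        rcases hbmc with h | h
        · exact absurd (h.trans (hta.symm.trans hti)) hji
        · exact h
      show lbpar m n k hp hk α β ⟨Sum.inl t, ham⟩ = _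
      rw [lbpar, if_pos hta]
      exact Subtype.ext (by
        show Sum.inr (Sum.inl (t.1.1, β)) = Sum.inr (Sum.inl (i, j))
        rw [hti, hj])
    · have htb : t.1.1 = β := hamc.resolve_left hta
      have hj : j = α := by
        rcases hbmc with h | h
        · exact h
        · exact absurd (h.trans (htb.symm.trans hti)) hji
      show lbpar m n k hp hk α β ⟨Sum.inl t, ham⟩ = _
      rw [lbpar, if_neg hta]
      exact Subtype.ext (by
        show Sum.inr (Sum.inl (t.1.1, α)) = Sum.inr (Sum.inl (i, j))
        rw [hti, hj])
  · subst ha'; subst hb'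
    right
    refine ⟨?_, by simp [lbrk]⟩
    have hamc : t.1.1 = α ∨ t.1.1 = β := ham
    have hbmc : pick3 k hk t1.1.1 t2.1.1 = α ∨ pick3 k hk t1.1.1 t2.1.1 = β := hbm
    have hpne := pick3_ne k hk t1.1.1 t2.1.1
    show lbpar m n k hp hk α β ⟨Sum.inr (Sum.inr (t1, t2)), hbm⟩ = _
    rcases hor with rfl | rfl
    · rw [lbpar, dif_pos hamc]
    · have hnot : ¬(t1.1.1 = α ∨ t1.1.1 = β) := by
        intro h1
        rcases h1 with h1 | h1 <;> rcases hamc with hA | hA <;>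
          rcases hbmc with hB | hB <;> simp_all
      rw [lbpar, dif_neg hnot, dif_pos hamc]

lemma lb_acyclic (m n k : ℕ) (hp : 2 ≤ 2 * m + n) (hk : 3 ≤ k) (α β : Fin k) :
    ((LBM m n k hp).underlying.induce
      {v | lbcol m n k hp hk v = α ∨ lbcol m n k hp hk v = β}).IsAcyclic := by
  apply acyclic_of_parent (rk := fun v => lbrk m n k hp v.1)
    (par := lbpar m n k hp hk α β)
  intro a b hadj
  rw [SimpleGraph.comap_adj] at hadj
  rw [lb_adj_iff] at hadj
  rcases hadj with h | h
  · obtain ⟨l, hl⟩ := Option.isSome_iff_exists.mp h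
    exact lb_crit_half m n k hp hk α β a b l hl
  · obtain ⟨l, hl⟩ := Option.isSome_iff_exists.mp h
    exact (lb_crit_half m n k hp hk α β b a l hl).symm

end LB3

section LB4

lemma lb_atleast (m n k : ℕ) (hp : 2 ≤ 2 * m + n) :
    CMChromAtLeast (LBM m n k hp) (k * (2 * m + n) ^ (k - 1)) := by
  intro W inst H f hf
  have hinj : Function.Injective (fun t : CoreT m n k hp => f (Sum.inl t)) := by
    intro t t' heq
    have heq' : f (Sum.inl t) = f (Sum.inl t') := heq
    by_contra hne
    by_cases hcl : t.1.1 = t'.1.1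
    · have hx : t.1.2 ≠ t'.1.2 := fun h' => hne (Subtype.ext (Prod.ext hcl h'))
      obtain ⟨j, hj⟩ := Function.ne_iff.mp hx
      have hji : j ≠ t.1.1 := by
        intro h'
        apply hj
        rw [h', t.2, hcl, t'.2]
      have hh1 : lbhalf m n k hp (Sum.inl t) (Sum.inr (Sum.inl (t.1.1, j)))
          = some (iota m n (t.1.2 j)) := by
        simp [lbhalf, hji]
      have hh2 : lbhalf m n k hp (Sum.inl t') (Sum.inr (Sum.inl (t.1.1, j)))
          = some (iota m n (t'.1.2 j)) := by
        simp [lbhalf, hcl, hcl ▸ hji]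
      have h1 : (LBM m n k hp).link (Sum.inl t) (Sum.inr (Sum.inl (t.1.1, j)))
          = some (iota m n (t.1.2 j)) := by
        show lblk m n k hp _ _ = _
        simp only [lblk, hh1]
      have h2 : (LBM m n k hp).link (Sum.inl t') (Sum.inr (Sum.inl (t.1.1, j)))
          = some (iota m n (t'.1.2 j)) := by
        show lblk m n k hp _ _ = _
        simp only [lblk, hh2]
      have e1 := hf _ _ _ h1
      have e2 := hf _ _ _ h2
      rw [heq'] at e1
      exact hj (iota_inj m n (Option.some_injective _ (e1.symm.trans e2)))
    · have htt' : t ≠ t' := fun h => hcl (congrArg (fun x => x.1.1) h)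
      have hh1 : lbhalf m n k hp (Sum.inl t) (Sum.inr (Sum.inr (t, t')))
          = some (iota m n ⟨0, by omega⟩) := by
        simp [lbhalf, hcl]
      have hh2 : lbhalf m n k hp (Sum.inl t') (Sum.inr (Sum.inr (t, t')))
          = some (iota m n ⟨1, by omega⟩) := by
        simp [lbhalf, hcl, Ne.symm htt']
      have h1 : (LBM m n k hp).link (Sum.inl t) (Sum.inr (Sum.inr (t, t')))
          = some (iota m n ⟨0, by omega⟩) := by
        show lblk m n k hp _ _ = _
        simp only [lblk, hh1]
      have h2 : (LBM m n k hp).link (Sum.inl t') (Sum.inr (Sum.inr (t, t')))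
          = some (iota m n ⟨1, by omega⟩) := by
        show lblk m n k hp _ _ = _
        simp only [lblk, hh2]
      have e1 := hf _ _ _ h1
      have e2 := hf _ _ _ h2
      rw [heq'] at e1
      have := iota_inj m n (Option.some_injective _ (e1.symm.trans e2))
      simp [Fin.ext_iff] at this
  have hcard : Fintype.card (CoreT m n k hp) = k * (2 * m + n) ^ (k - 1) := by
    have h := card_core k (Fin (2 * m + n)) (⟨0, by omega⟩ : Fin (2 * m + n))
    rw [Fintype.card_fin] at h
    exact h
  rw [← hcard]
  exact @Fintype.card_le_of_injective _ _ _ inst _ hinj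

end LB4

/-- For `(m,n) ≠ (0,1)` with `p = 2m+n ≥ 2` and `k ≥ 3`, the maximum of
`χ_{(m,n)}(G)` over all simple graphs `G` with acyclic chromatic number at most `k`
equals `k·p^(k-1)`: every colored mixed graph whose underlying graph is acyclically
`k`-colorable has `(m,n)`-chromatic number at most `k·p^(k-1)`, and this bound is attained. -/
theorem mixed_chromatic_of_acyclic_class_eq (m n k : ℕ) (hmn : (m, n) ≠ (0, 1))
    (hp : 2 ≤ 2 * m + n) (hk : 3 ≤ k) :
    (∀ (V : Type) (_ : Fintype V) (M : CMGraph m n V),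
        AcycChromAtMost M.underlying k → CMChromAtMost M (k * (2 * m + n) ^ (k - 1))) ∧
    (∃ (V : Type) (_ : Fintype V) (M : CMGraph m n V),
        AcycChromAtMost M.underlying k ∧ CMChromAtLeast M (k * (2 * m + n) ^ (k - 1))) := by
  constructor
  · intro V iV M hac
    exact upper_bound m n k hp hk V iV M hac
  · refine ⟨LBV m n k hp, inferInstance, LBM m n k hp, ?_, lb_atleast m n k hp⟩
    exact ⟨lbcol m n k hp hk, lb_proper m n k hp hk, fun i j => lb_acyclic m n k hp hk i j⟩
end

section
/- Let m, n ≥ 0 be integers with p = 2m+n ≥ 2, and let G be a finite simple graph such that every (m,n)-colored mixed graph with underlying graph G admits a homomorphism to some (m,n)-colored mixed graph on at most k vertices (k ≥ 2). Then the acyclic chromatic number of G satisfies χ_a(G) ≤ k^{⌈log_p ⌈log_p k + k/2⌉⌉ + 1}. -/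
/-!
Write `p = 2m + n` and `r = ⌈log_p k + k/2⌉`. Orient the edges of a graph `H` along a vertex
order. Each of the `p ^ |E(H)|` ways to give every edge one of the `p` link types is determined
by a homomorphism to a `k`-vertex target together with the links of the target between its
`k choose 2` pairs `a < b`, so `p ^ |E(H)| ≤ k ^ |V(H)| * p ^ (k choose 2)`. For an induced
subgraph `H` of minimum degree `2r` this forces `|V(H)| < k ≤ 2r`, which is absurd; hence `G` is
`(2r - 1)`-degenerate.

Along a degeneracy order, every vertex names its at most `2r - 1` earlier neighbours by distinct
words of length `t = ⌈log_p r⌉ + 1` over the `p` link types. The `j`-th letters define a colored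
mixed graph on `G`, and the tuple of the `t` homomorphisms is a proper `k ^ t`-colouring in which
the earlier neighbours of every vertex get distinct colours. So a two-coloured cycle cannot
exist: its largest vertex would have two earlier neighbours of the same colour.
-/

open Finset

namespace Link

variable {m n : ℕ}

@[simp] lemma flip_flip_s6 (l : Link m n) : l.flip.flip = l := by
  cases l <;> rfl

lemma flip_injective : Function.Injective (Link.flip (m := m) (n := n)) :=
  Function.LeftInverse.injective flip_flip_s6

def equivSum : Link m n ≃ Fin m ⊕ Fin m ⊕ Fin n where
  toFun
    | .arcOut c => .inl c
    | .arcIn c => .inr (.inl c)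
    | .edge c => .inr (.inr c)
  invFun
    | .inl c => .arcOut c
    | .inr (.inl c) => .arcIn c
    | .inr (.inr c) => .edge c
  left_inv l := by cases l <;> rfl
  right_inv x := by rcases x with c | c | c <;> rfl

instance : Fintype (Link m n) := Fintype.ofEquiv _ equivSum.symm

lemma card_eq : Fintype.card (Link m n) = 2 * m + n := by
  rw [Fintype.card_congr equivSum]
  simp only [Fintype.card_sum, Fintype.card_fin]
  ring

lemma nonempty_of_pos (hp : 0 < 2 * m + n) : Nonempty (Link m n) :=
  Fintype.card_pos_iff.mp (card_eq.symm ▸ hp)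

end Link

section Hom

variable {m n : ℕ} {V W W' : Type}

lemma IsCMHom.comp {M : CMGraph m n V} {H : CMGraph m n W} {K : CMGraph m n W'}
    {f : V → W} {g : W → W'} (hg : IsCMHom H K g) (hf : IsCMHom M H f) :
    IsCMHom M K (g ∘ f) :=
  fun u v l h => hg _ _ l (hf u v l h)

lemma IsCMHom.map_ne_of_adj {M : CMGraph m n V} {H : CMGraph m n W} {f : V → W}
    (hf : IsCMHom M H f) {u v : V} (h : M.underlying.Adj u v) : f u ≠ f v := by
  obtain ⟨l, hl⟩ := Option.isSome_iff_exists.mp h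
  intro huv
  have := hf u v l hl
  rw [huv, H.loopless] at this
  cases this

end Hom

namespace CMGraph

variable {m n : ℕ} {V W W' : Type}

open Classical in
noncomputable def ofLabel [LinearOrder V] (G : SimpleGraph V)
    (c : ∀ u v, G.Adj u v → Link m n) : CMGraph m n V where
  link u v := if h : G.Adj u v then
    some (if u < v then c u v h else (c v u h.symm).flip) else none
  symm u v := by
    by_cases h : G.Adj u v
    · rcases h.ne.lt_or_gt with huv | hvu
      · simp [h, h.symm, huv, huv.not_gt]
      · simp [h, h.symm, hvu, hvu.not_gt]
    · have h' : ¬G.Adj v u := fun h' => h h'.symm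
      simp [h, h']
  loopless v := by simp

section ofLabel

variable [LinearOrder V] {G : SimpleGraph V} {c : ∀ u v, G.Adj u v → Link m n}

@[simp] lemma underlying_ofLabel : (ofLabel G c).underlying = G := by
  ext u v
  by_cases h : G.Adj u v <;> simp [ofLabel, underlying, h]

lemma ofLabel_link_of_lt {u v : V} (h : G.Adj u v) (huv : u < v) :
    (ofLabel G c).link u v = some (c u v h) := by
  simp [ofLabel, h, huv]

end ofLabel

lemma exists_underlying_eq [Nonempty (Link m n)] (G : SimpleGraph V) :
    ∃ M : CMGraph m n V, M.underlying = G :=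
  let _ : LinearOrder V := IsWellOrder.linearOrder WellOrderingRel
  ⟨ofLabel G fun _ _ _ => Classical.arbitrary _, underlying_ofLabel⟩

open Classical in
noncomputable def map (H : CMGraph m n W) (e : W ↪ W') : CMGraph m n W' where
  link a b := (Function.partialInv e a).bind fun x =>
    (Function.partialInv e b).bind fun y => H.link x y
  symm a b := by
    cases Function.partialInv e a <;> cases Function.partialInv e b <;>
      simp only [Option.bind_none, Option.bind_some, Option.map_none]
    exact H.symm _ _
  loopless a := by
    cases Function.partialInv e a <;> simp [H.loopless]

lemma isCMHom_map (H : CMGraph m n W) (e : W ↪ W') : IsCMHom H (H.map e) e := by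
  intro u v l h
  simp [map, Function.partialInv_left e.injective, h]

lemma _root_.CMChromAtMost.exists_fin {M : CMGraph m n V} {k : ℕ} (h : CMChromAtMost M k) :
    ∃ (H : CMGraph m n (Fin k)) (f : V → Fin k), IsCMHom M H f := by
  obtain ⟨W, _, H, f, hcard, hf⟩ := h
  obtain ⟨e⟩ := Function.Embedding.nonempty_of_card_le (hcard.trans (Fintype.card_fin k).ge)
  exact ⟨H.map e, e ∘ f, (isCMHom_map H e).comp hf⟩

open Classical in
noncomputable def extend {s : Set V} (M : CMGraph m n s) (N : CMGraph m n V) : CMGraph m n V where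
  link u v := if h : u ∈ s ∧ v ∈ s then M.link ⟨u, h.1⟩ ⟨v, h.2⟩ else N.link u v
  symm u v := by
    by_cases huv : u ∈ s ∧ v ∈ s
    · rw [dif_pos huv, dif_pos huv.symm]
      exact M.symm _ _
    · rw [dif_neg huv, dif_neg (mt And.symm huv)]
      exact N.symm u v
  loopless v := by split_ifs <;> simp only [M.loopless, N.loopless]

lemma isCMHom_extend {s : Set V} (M : CMGraph m n s) (N : CMGraph m n V) :
    IsCMHom M (M.extend N) Subtype.val :=
  fun a b _ hl => (dif_pos ⟨a.2, b.2⟩).trans hl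

lemma underlying_extend {G : SimpleGraph V} {s : Set V} {M : CMGraph m n s} {N : CMGraph m n V}
    (hM : M.underlying = G.induce s) (hN : N.underlying = G) : (M.extend N).underlying = G := by
  ext u v
  by_cases huv : u ∈ s ∧ v ∈ s
  · simpa [extend, underlying, huv] using congrArg (·.Adj ⟨u, huv.1⟩ ⟨v, huv.2⟩) hM
  · simpa [extend, underlying, huv] using congrArg (·.Adj u v) hN

theorem forall_cmChromAtMost_induce [Nonempty (Link m n)] {G : SimpleGraph V} {k : ℕ}
    (h : ∀ M : CMGraph m n V, M.underlying = G → CMChromAtMost M k) (s : Set V)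
    (M : CMGraph m n s) (hM : M.underlying = G.induce s) : CMChromAtMost M k := by
  obtain ⟨N, hN⟩ := exists_underlying_eq (m := m) (n := n) G
  obtain ⟨W, _, H, f, hcard, hf⟩ := h _ (underlying_extend hM hN)
  exact ⟨W, _, H, f ∘ Subtype.val, hcard, hf.comp (isCMHom_extend M N)⟩

section linkCode

variable [LinearOrder W] [Nonempty (Link m n)]

noncomputable def linkCode (H : CMGraph m n W) : {q : W × W // q.1 < q.2} → Link m n :=
  fun q => (H.link q.1.1 q.1.2).getD (Classical.arbitrary _)

lemma link_eq_of_linkCode_eq {H H' : CMGraph m n W} (hc : H.linkCode = H'.linkCode)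
    {a b : W} {l l' : Link m n} (h : H.link a b = some l) (h' : H'.link a b = some l') :
    l = l' := by
  rcases lt_trichotomy a b with hab | rfl | hba
  · simpa [linkCode, h, h'] using congrFun hc ⟨(a, b), hab⟩
  · rw [H.loopless] at h
    cases h
  · apply Link.flip_injective
    simpa [linkCode, H.symm a b, H'.symm a b, h, h'] using congrFun hc ⟨(b, a), hba⟩

end linkCode

end CMGraph

lemma Fintype.card_subtype_fst_lt (α : Type*) [Fintype α] [LinearOrder α] :
    Fintype.card {q : α × α // q.1 < q.2} = (Fintype.card α).choose 2 := by
  rw [Fintype.card_subtype, ← Finset.card_univ, ← Finset.card_product_filter_lt,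
    Finset.univ_product_univ]

namespace CMGraph

variable {m n : ℕ} {V : Type}

theorem pow_card_edgeFinset_le [Fintype V] [Nonempty (Link m n)] {G : SimpleGraph V}
    [DecidableRel G.Adj] {k : ℕ}
    (h : ∀ M : CMGraph m n V, M.underlying = G → CMChromAtMost M k) :
    (2 * m + n) ^ #G.edgeFinset ≤ k ^ Fintype.card V * (2 * m + n) ^ k.choose 2 := by
  let _ : LinearOrder V := LinearOrder.lift' _ (Fintype.equivFin V).injective
  let M (σ : G.edgeSet → Link m n) : CMGraph m n V := ofLabel G fun u v huv => σ ⟨s(u, v), huv⟩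
  choose H f hf using fun σ => (h (M σ) underlying_ofLabel).exists_fin
  -- the label of `s(u, v)` is the link of the target between `f u` and `f v`
  have hinj : Function.Injective fun σ => (f σ, (H σ).linkCode) := by
    intro σ σ' hσ
    obtain ⟨hfσ, hHσ⟩ := Prod.mk.inj hσ
    have key {u v : V} (huv : G.Adj u v) (hlt : u < v) : σ ⟨s(u, v), huv⟩ = σ' ⟨s(u, v), huv⟩ :=
      link_eq_of_linkCode_eq hHσ (hf σ u v _ (ofLabel_link_of_lt huv hlt))
        (hfσ ▸ hf σ' u v _ (ofLabel_link_of_lt huv hlt))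
    funext ⟨e, he⟩
    induction e using Sym2.ind with
    | _ u v =>
      rcases (G.mem_edgeSet.mp he).ne.lt_or_gt with hlt | hgt
      · exact key he hlt
      · convert key (G.mem_edgeSet.mp he).symm hgt using 3 <;> exact Subtype.ext Sym2.eq_swap
  have := Fintype.card_le_of_injective _ hinj
  rwa [Fintype.card_fun, Fintype.card_prod, Fintype.card_fun, Fintype.card_fun,
    SimpleGraph.card_edgeSet, Link.card_eq, Fintype.card_fin, Fintype.card_subtype_fst_lt,
    Fintype.card_fin] at this

end CMGraph

lemma lt_of_pow_le_pow_mul_pow_choose_two {p k r S : ℕ} (hp : 1 < p) (hk : 0 < k)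
    (hr : Real.logb p k + k / 2 ≤ r) (h : p ^ (r * S) ≤ k ^ S * p ^ k.choose 2) : S < k := by
  have hp' : (1 : ℝ) < p := by exact_mod_cast hp
  have hk' : (0 : ℝ) < k := by exact_mod_cast hk
  have hlog : (r * S : ℝ) ≤ S * Real.logb p k + k * (k - 1) / 2 := by
    have := Real.logb_le_logb_of_le hp' (by positivity) (by exact_mod_cast h :
      ((p : ℝ) ^ (r * S) ≤ (k : ℝ) ^ S * (p : ℝ) ^ k.choose 2))
    rwa [Real.logb_mul (by positivity) (by positivity), Real.logb_pow, Real.logb_pow,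
      Real.logb_pow, Real.logb_self_eq_one hp', Nat.cast_choose_two, Nat.cast_mul, mul_one,
      mul_one] at this
  have : (S : ℝ) * k < k * k := by nlinarith [mul_le_mul_of_nonneg_right hr (Nat.cast_nonneg S)]
  exact_mod_cast lt_of_mul_lt_mul_right this hk'.le

theorem CMGraph.degenAtMost_of_forall_cmChromAtMost {m n : ℕ} {V : Type} [Fintype V]
    {G : SimpleGraph V} {k : ℕ} (hp : 1 < 2 * m + n) (hk : 0 < k)
    (h : ∀ M : CMGraph m n V, M.underlying = G → CMChromAtMost M k) :
    DegenAtMost G (2 * ⌈Real.logb (2 * m + n) k + k / 2⌉₊ - 1) := by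
  classical
  set r := ⌈Real.logb (2 * m + n) k + k / 2⌉₊
  have hr : Real.logb ((2 * m + n : ℕ) : ℝ) k + k / 2 ≤ r := by
    push_cast
    exact Nat.le_ceil _
  have hkr : k ≤ 2 * r := by
    have : 0 ≤ Real.logb ((2 * m + n : ℕ) : ℝ) k :=
      Real.logb_nonneg (by exact_mod_cast hp) (by exact_mod_cast hk)
    exact_mod_cast (by linarith : (k : ℝ) ≤ 2 * r)
  have := Link.nonempty_of_pos (m := m) (n := n) (by omega)
  intro s hs
  by_contra! hdeg
  set G' := G.induce s
  have hdeg' (a : s) : 2 * r ≤ G'.degree a := by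
    have hdeg_eq : G'.degree a = (G.neighborSet a ∩ s).ncard := by
      rw [← G'.card_neighborFinset_eq_degree, ← card_map (.subtype (· ∈ s)),
        SimpleGraph.map_neighborFinset_induce, ← Set.ncard_coe_finset]
      simp
    have := hdeg a a.2
    omega
  have hE : r * Fintype.card s ≤ #G'.edgeFinset := by
    have := sum_le_sum fun a (_ : a ∈ univ) => hdeg' a
    rw [sum_const, card_univ, G'.sum_degrees_eq_twice_card_edges, smul_eq_mul] at this
    linarith
  have hS : k < Fintype.card s := by
    obtain ⟨v, hv⟩ := hs
    exact hkr.trans_lt ((hdeg' ⟨v, hv⟩).trans_lt (G'.degree_lt_card_verts ⟨v, hv⟩))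
  have hcount := pow_card_edgeFinset_le (forall_cmChromAtMost_induce h s)
  exact (lt_of_pow_le_pow_mul_pow_choose_two hp hk hr
    ((Nat.pow_le_pow_right (by omega) hE).trans hcount)).not_gt hS

section Degeneracy

variable {V : Type} [DecidableEq V] {G : SimpleGraph V} [DecidableRel G.Adj] {d : ℕ}

/-- Peel off a vertex of degree at most `d` and put it last. -/
lemma DegenAtMost.exists_injOn_backDegree_le (hG : DegenAtMost G d) (s : Finset V) :
    ∃ ι : V → ℕ, Set.InjOn ι s ∧ ∀ v ∈ s, #{u ∈ s | G.Adj v u ∧ ι u < ι v} ≤ d := by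
  induction s using Finset.strongInduction with
  | H s ih =>
  rcases s.eq_empty_or_nonempty with rfl | hs
  · exact ⟨fun _ => 0, by simp, by simp⟩
  obtain ⟨v, hv, hvd⟩ := hG s (by simpa using hs)
  rw [mem_coe] at hv
  obtain ⟨ι, hinj, hback⟩ := ih (s.erase v) (erase_ssubset hv)
  have hlt (u) (hu : u ∈ s.erase v) : ι u < (s.erase v).sup ι + 1 :=
    Nat.lt_succ_of_le (le_sup hu)
  set ι' := Function.update ι v ((s.erase v).sup ι + 1)
  have hι' (u) (hu : u ∈ s.erase v) : ι' u = ι u := Function.update_of_ne (ne_of_mem_erase hu) _ _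
  have hι'v : ι' v = (s.erase v).sup ι + 1 := Function.update_self _ _ _
  refine ⟨ι', ?_, fun u hu => ?_⟩
  · rw [← insert_erase hv, coe_insert, Set.injOn_insert (by simp)]
    refine ⟨hinj.congr fun u hu => (hι' u hu).symm, ?_⟩
    rintro ⟨u, hu, hu'⟩
    rw [hι' u hu, hι'v] at hu'
    exact (hlt u hu).ne hu'
  by_cases huv : u = v
  · subst huv
    calc #{w ∈ s | G.Adj u w ∧ ι' w < ι' u} ≤ #{w ∈ s | G.Adj u w} :=
          card_le_card (monotone_filter_right s fun _ _ => And.left)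
      _ = (G.neighborSet u ∩ s).ncard := by
          rw [← Set.ncard_coe_finset]
          congr 1
          ext
          simp [and_comm]
      _ ≤ d := hvd
  · have hu' : u ∈ s.erase v := mem_erase.mpr ⟨huv, hu⟩
    refine (card_le_card fun w hw => ?_).trans (hback u hu')
    simp only [mem_filter] at hw ⊢
    have hwv : w ≠ v := by
      rintro rfl
      have := hw.2.2
      rw [hι' u hu', hι'v] at this
      exact (hlt u hu').not_gt this
    have hw' : w ∈ s.erase v := mem_erase.mpr ⟨hwv, hw.1⟩
    rw [← hι' u hu', ← hι' w hw']
    exact ⟨hw', hw.2⟩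

lemma DegenAtMost.exists_injective_backDegree_le [Fintype V] (hG : DegenAtMost G d) :
    ∃ ι : V → ℕ, Function.Injective ι ∧ ∀ v, #{u | G.Adj v u ∧ ι u < ι v} ≤ d := by
  obtain ⟨ι, hinj, hback⟩ := hG.exists_injOn_backDegree_le univ
  exact ⟨ι, by simpa using hinj, fun v => hback v (mem_univ v)⟩

end Degeneracy

lemma Finset.exists_injOn_of_card_le {α β : Type*} [Fintype β] [Nonempty β] {s : Finset α}
    (h : #s ≤ Fintype.card β) : ∃ f : α → β, Set.InjOn f s := by
  obtain ⟨f, -, hf⟩ := s.finite_toSet.exists_injOn_of_encard_le (t := (Set.univ : Set β))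
    (by simpa [ENat.card_eq_coe_fintype_card] using h)
  exact ⟨f, hf⟩

namespace SimpleGraph

variable {V : Type*} {G : SimpleGraph V}

lemma Walk.IsCycle.exists_adj_ne {u x : V} {w : G.Walk u u} (hw : w.IsCycle)
    (hx : x ∈ w.support) :
    ∃ y z, y ≠ z ∧ G.Adj x y ∧ G.Adj x z ∧ y ∈ w.support ∧ z ∈ w.support := by
  obtain ⟨y, z, hyz, he⟩ := Set.ncard_eq_two.mp (hw.ncard_neighborSet_toSubgraph_eq_two hx)
  have hy : w.toSubgraph.Adj x y := by
    rw [← Subgraph.mem_neighborSet, he]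
    exact Set.mem_insert y {z}
  have hz : w.toSubgraph.Adj x z := by
    rw [← Subgraph.mem_neighborSet, he]
    exact Set.mem_insert_of_mem y rfl
  exact ⟨y, z, hyz, hy.adj_sub, hz.adj_sub, w.mem_verts_toSubgraph.mp hy.snd_mem,
    w.mem_verts_toSubgraph.mp hz.snd_mem⟩

/-- The largest vertex of a cycle in a two-coloured subgraph has two earlier neighbours on it,
both of the colour it does not have. -/
theorem isAcyclic_induce_of_backNeighbors [LinearOrder V] {α : Type*} {c : V → α}
    (hc : ∀ u v, G.Adj u v → c u ≠ c v)
    (hback : ∀ x y z, G.Adj x y → G.Adj x z → y < x → z < x → c y = c z → y = z) (a b : α) :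
    (G.induce {v | c v = a ∨ c v = b}).IsAcyclic := by
  intro x₀ w hw
  obtain ⟨x, hx, hmax⟩ := w.support.toFinset.exists_max_image Subtype.val
    ⟨x₀, List.mem_toFinset.mpr w.start_mem_support⟩
  obtain ⟨y, z, hyz, hxy, hxz, hy, hz⟩ := hw.exists_adj_ne (List.mem_toFinset.mp hx)
  have hyx : y.val < x.val := (hmax y (List.mem_toFinset.mpr hy)).lt_of_ne
    fun h => hxy.ne (Subtype.ext h.symm)
  have hzx : z.val < x.val := (hmax z (List.mem_toFinset.mpr hz)).lt_of_ne
    fun h => hxz.ne (Subtype.ext h.symm)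
  have hcyz : c y = c z := by
    have := hc _ _ hxy
    have := hc _ _ hxz
    rcases x.2 with h | h <;> rcases y.2 with h' | h' <;> rcases z.2 with h'' | h'' <;>
      simp_all
  exact hyz (Subtype.ext (hback _ _ _ hxy hxz hyx hzx hcyz))

end SimpleGraph

theorem CMGraph.acycChromAtMost_pow_of_degenAtMost {m n : ℕ} {V : Type} [Fintype V]
    [Nonempty (Link m n)] {G : SimpleGraph V} {d t k : ℕ} (hG : DegenAtMost G d)
    (hd : d ≤ (2 * m + n) ^ t) (ht : 0 < t)
    (h : ∀ M : CMGraph m n V, M.underlying = G → CMChromAtMost M k) :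
    AcycChromAtMost G (k ^ t) := by
  classical
  obtain ⟨ι, hι, hback⟩ := hG.exists_injective_backDegree_le
  let _ : LinearOrder V := LinearOrder.lift' ι hι
  choose lab hlab using fun x => exists_injOn_of_card_le (β := Fin t → Link m n)
    (s := {u | G.Adj x u ∧ u < x})
    ((hback x).trans (hd.trans_eq (by simp [Link.card_eq])))
  let M (j : Fin t) : CMGraph m n V := ofLabel G fun u v _ => lab v u j
  choose H f hf using fun j => (h (M j) underlying_ofLabel).exists_fin
  let c (v : V) : Fin (k ^ t) := finFunctionFinEquiv fun j => f j v
  have hc : ∀ u v, G.Adj u v → c u ≠ c v := fun u v huv hcuv =>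
    (hf ⟨0, ht⟩).map_ne_of_adj (by simpa [M] using huv)
      (congrFun (finFunctionFinEquiv.injective hcuv) _)
  have hcback : ∀ x y z, G.Adj x y → G.Adj x z → y < x → z < x → c y = c z → y = z := by
    intro x y z hxy hxz hyx hzx hcyz
    refine hlab x (by simpa using ⟨hxy, hyx⟩) (by simpa using ⟨hxz, hzx⟩) (funext fun j => ?_)
    have hy := hf j y x _ (ofLabel_link_of_lt hxy.symm hyx)
    have hz := hf j z x _ (ofLabel_link_of_lt hxz.symm hzx)
    rw [congrFun (finFunctionFinEquiv.injective hcyz) j, hz] at hy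
    exact (Option.some.inj hy).symm
  exact ⟨c, hc, G.isAcyclic_induce_of_backNeighbors hc hcback⟩

lemma two_mul_sub_one_le_pow_natCeil_logb {p : ℕ} (hp : 2 ≤ p) (r : ℕ) :
    2 * r - 1 ≤ p ^ (⌈Real.logb p r⌉₊ + 1) := by
  have := Nat.le_pow_clog hp r
  rw [Real.natCeil_logb_natCast, pow_succ]
  have := Nat.mul_le_mul this hp
  omega

/-- If every `(m,n)`-colored mixed graph with underlying graph `G`
admits a homomorphism to some `(m,n)`-colored mixed graph on at most `k` vertices
(`k ≥ 2`, `p = 2m+n ≥ 2`), then `χ_a(G) ≤ k^(⌈log_p ⌈log_p k + k/2⌉⌉ + 1)`. -/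
theorem acyclic_le_of_mixed_chromatic_combined (m n k : ℕ)
    (hp : 2 ≤ 2 * m + n) (hk : 2 ≤ k)
    (V : Type) [Fintype V] (G : SimpleGraph V)
    (h : ∀ M : CMGraph m n V, M.underlying = G → CMChromAtMost M k) :
    AcycChromAtMost G
      (k ^ (⌈Real.logb (2 * m + n : ℝ)
              ((⌈Real.logb (2 * m + n : ℝ) (k : ℝ) + (k : ℝ) / 2⌉₊ : ℕ) : ℝ)⌉₊ + 1)) := by
  have := Link.nonempty_of_pos (m := m) (n := n) (by omega)
  have hdeg := CMGraph.degenAtMost_of_forall_cmChromAtMost (by omega) (by omega) h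
  refine CMGraph.acycChromAtMost_pow_of_degenAtMost hdeg ?_ (Nat.succ_pos _) h
  exact_mod_cast two_mul_sub_one_le_pow_natCeil_logb hp _
end

section
/- Let t ≥ 5 and p ≥ 2 be integers, let c = 2(t-1)^p · p^{t-1}, and let j be an integer with 1 ≤ j ≤ t-1. Then the binomial tail sum satisfies ∑_{i=0}^{(t-j)(t-2)} C(c-j, i) · p^{-ij} · (1 - p^{-j})^{c-i-j} < e^{-c·p^{-j}} · c^{(t-j)(t-2)+1}. -/
lemma two_mul_le_two_pow' (j : ℕ) : 2 * j ≤ 2 ^ j := by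
  induction j with
  | zero => simp
  | succ n ih =>
    have := @Nat.lt_two_pow_self n
    rw [pow_succ]
    omega

/-- For integers `t ≥ 5`, `p ≥ 2`, `1 ≤ j ≤ t-1` and
`c = 2(t-1)^p·p^(t-1)`, the binomial tail sum satisfies
`∑_{i=0}^{(t-j)(t-2)} C(c-j,i) p^(-ij) (1-p^(-j))^(c-i-j)
  < e^(-c·p^(-j)) · c^((t-j)(t-2)+1)`. -/
theorem binomial_tail_bound (t p j c : ℕ) (ht : 5 ≤ t) (hp : 2 ≤ p)
    (hj1 : 1 ≤ j) (hjt : j ≤ t - 1)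
    (hc : c = 2 * (t - 1) ^ p * p ^ (t - 1)) :
    ∑ i ∈ Finset.range ((t - j) * (t - 2) + 1),
        (Nat.choose (c - j) i : ℝ) * (p : ℝ) ^ (-((i : ℤ) * (j : ℤ))) *
          (1 - (p : ℝ) ^ (-(j : ℤ))) ^ (c - i - j) <
      Real.exp (-(c : ℝ) * (p : ℝ) ^ (-(j : ℤ))) * (c : ℝ) ^ ((t - j) * (t - 2) + 1) := by
  set M := (t - j) * (t - 2) with hM
  set x : ℝ := (p : ℝ) ^ (-(j : ℤ)) with hxdef
  have hpR : (2 : ℝ) ≤ p := by exact_mod_cast hp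
  have hxeq : x = ((p : ℝ) ^ j)⁻¹ := by rw [hxdef, zpow_neg, zpow_natCast]
  have hpj2 : (2 : ℝ) ≤ (p : ℝ) ^ j := by
    calc (2:ℝ) = 2 ^ 1 := by norm_num
    _ ≤ 2 ^ j := pow_le_pow_right₀ (by norm_num) hj1
    _ ≤ (p:ℝ) ^ j := pow_le_pow_left₀ (by norm_num) hpR j
  have hx0 : 0 < x := by rw [hxeq]; positivity
  have hxhalf : x ≤ 1 / 2 := by
    rw [hxeq]
    rw [inv_le_comm₀ (by positivity) (by norm_num)]
    linarith
  have h2jpj : (2:ℝ) ^ j ≤ (p:ℝ) ^ j := pow_le_pow_left₀ (by norm_num) hpR j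
  have h2j : (2:ℝ) * j ≤ 2 ^ j := by exact_mod_cast two_mul_le_two_pow' j
  have hxj : x * j ≤ 1 / 2 := by
    rw [hxeq, inv_mul_le_iff₀ (by positivity)]
    nlinarith
  have hexphalf : Real.exp (1/2) < 2 := by
    have h := Real.log_two_gt_d9
    calc Real.exp (1/2) < Real.exp (Real.log 2) := Real.exp_lt_exp.mpr (by linarith)
    _ = 2 := Real.exp_log (by norm_num)
  have hxex : x * Real.exp x ≤ 1 := by
    have h1 : Real.exp x ≤ 2 := by
      calc Real.exp x ≤ Real.exp (1/2) := Real.exp_le_exp.mpr hxhalf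
      _ ≤ 2 := le_of_lt hexphalf
    nlinarith [Real.exp_pos x]
  have hc512 : 512 ≤ c := by
    rw [hc]
    calc (512:ℕ) = 2 * 4 ^ 2 * 2 ^ 4 := by norm_num
    _ ≤ 2 * (t-1) ^ p * p ^ (t-1) := by
        apply Nat.mul_le_mul
        · apply Nat.mul_le_mul_left
          calc (4:ℕ) ^ 2 ≤ 4 ^ p := Nat.pow_le_pow_right (by norm_num) hp
          _ ≤ (t-1) ^ p := Nat.pow_le_pow_left (by omega) p
        · calc (2:ℕ) ^ 4 ≤ 2 ^ (t-1) := Nat.pow_le_pow_right (by norm_num) (by omega)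
          _ ≤ p ^ (t-1) := Nat.pow_le_pow_left hp _
  have hcR : (512:ℝ) ≤ c := by exact_mod_cast hc512
  -- per-term bound
  have hterm : ∀ i ∈ Finset.range (M + 1),
      (Nat.choose (c - j) i : ℝ) * (p : ℝ) ^ (-((i : ℤ) * (j : ℤ))) *
          (1 - x) ^ (c - i - j)
      ≤ Real.exp (1/2) * (c:ℝ) ^ i * Real.exp (-((c:ℝ) * x)) := by
    intro i _
    have hpow : (p : ℝ) ^ (-((i : ℤ) * (j : ℤ))) = x ^ i := by
      rw [hxdef, ← zpow_natCast ((p:ℝ) ^ (-(j:ℤ))) i, ← zpow_mul]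
      congr 1
      ring
    rw [hpow]
    have h1x : (0:ℝ) ≤ 1 - x := by linarith
    have hNcast : (c:ℝ) - i - j ≤ ((c - i - j : ℕ) : ℝ) := by
      have h1 : c ≤ c - i - j + (i + j) := by omega
      have h2 := (Nat.cast_le (α := ℝ)).mpr h1
      push_cast at h2
      linarith
    calc (Nat.choose (c - j) i : ℝ) * x ^ i * (1 - x) ^ (c - i - j)
        ≤ (c:ℝ) ^ i * x ^ i * (Real.exp (-x)) ^ (c - i - j) := by
          apply mul_le_mul
          · apply mul_le_mul_of_nonneg_right _ (by positivity)
            calc (Nat.choose (c - j) i : ℝ) ≤ ((c - j : ℕ):ℝ) ^ i := by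
                  exact_mod_cast Nat.choose_le_pow (c - j) i
            _ ≤ (c:ℝ) ^ i := by
                  apply pow_le_pow_left₀ (by positivity)
                  exact_mod_cast Nat.sub_le c j
          · apply pow_le_pow_left₀ h1x
            linarith [Real.add_one_le_exp (-x)]
          · positivity
          · positivity
      _ = (c:ℝ) ^ i * x ^ i * Real.exp (-(x * (c - i - j : ℕ))) := by
          rw [← Real.exp_nat_mul]
          congr 1
          ring
      _ ≤ (c:ℝ) ^ i * x ^ i * Real.exp (-(x * ((c:ℝ) - i - j))) := by
          apply mul_le_mul_of_nonneg_left _ (by positivity)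
          apply Real.exp_le_exp.mpr
          have := mul_le_mul_of_nonneg_left hNcast (le_of_lt hx0)
          linarith
      _ = (c:ℝ) ^ i * x ^ i * (Real.exp ((i:ℝ) * x) * (Real.exp (x * j) * Real.exp (-((c:ℝ) * x)))) := by
          rw [← Real.exp_add, ← Real.exp_add]
          congr 1
          ring
      _ = (x * Real.exp x) ^ i * Real.exp (x * j) * ((c:ℝ) ^ i * Real.exp (-((c:ℝ) * x))) := by
          rw [mul_pow, ← Real.exp_nat_mul]
          ring
      _ ≤ 1 ^ i * Real.exp (1/2) * ((c:ℝ) ^ i * Real.exp (-((c:ℝ) * x))) := by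
          apply mul_le_mul_of_nonneg_right _ (by positivity)
          apply mul_le_mul
          · simpa using pow_le_one₀ (by positivity) hxex
          · exact Real.exp_le_exp.mpr hxj
          · positivity
          · positivity
      _ = Real.exp (1/2) * (c:ℝ) ^ i * Real.exp (-((c:ℝ) * x)) := by ring
  calc ∑ i ∈ Finset.range (M + 1),
        (Nat.choose (c - j) i : ℝ) * (p : ℝ) ^ (-((i : ℤ) * (j : ℤ))) * (1 - x) ^ (c - i - j)
      ≤ ∑ i ∈ Finset.range (M + 1),
        Real.exp (1/2) * (c:ℝ) ^ i * Real.exp (-((c:ℝ) * x)) := Finset.sum_le_sum hterm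
    _ = Real.exp (-((c:ℝ) * x)) * (Real.exp (1/2) * ∑ i ∈ Finset.range (M + 1), (c:ℝ) ^ i) := by
        rw [Finset.mul_sum, Finset.mul_sum]
        apply Finset.sum_congr rfl
        intro i _
        ring
    _ < Real.exp (-((c:ℝ) * x)) * (c:ℝ) ^ (M + 1) := by
        apply mul_lt_mul_of_pos_left _ (Real.exp_pos _)
        set S : ℝ := ∑ i ∈ Finset.range (M + 1), (c:ℝ) ^ i with hS
        have hgeom : S * ((c:ℝ) - 1) = (c:ℝ) ^ (M + 1) - 1 := geom_sum_mul (c:ℝ) (M + 1)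
        have hS1 : 1 ≤ S := by
          rw [hS]
          calc (1:ℝ) = ∑ i ∈ Finset.range 1, (c:ℝ) ^ i := by simp
          _ ≤ _ := by
              apply Finset.sum_le_sum_of_subset_of_nonneg
              · exact Finset.range_subset_range.mpr (by omega)
              · intro i _ _; positivity
        nlinarith [hexphalf, Real.exp_pos (1/2:ℝ)]
    _ = Real.exp (-(c:ℝ) * x) * (c:ℝ) ^ (M + 1) := by rw [neg_mul]
end
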